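/- arXiv:math/0202207 — 4 statements merged into one kernel-verified Lean document; each statement's English description precedes it below -/
import Mathlib

section
/- Let a, b, ε be real numbers with a > 0, b > 0, ε > 0, and suppose a/b is irrational. Then the set { m·a + n·b + s : m, n ∈ ℕ, s ∈ ℝ, |s| < ε } contains an interval of the form [T, +∞); i.e., there exists T ∈ ℝ such that every t ≥ T can be written as t = m·a + n·b + s with m, n ∈ ℕ and |s| < ε. -/
open Set

/-- There is a small positive element of `ℤa + ℤb` when `a/b` is irrational. -/
lemma exists_int_comb_small (a b δ : ℝ) (ha : 0 < a) (hb : 0 < b) (hδ : 0 < δ)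
    (hirr : Irrational (a / b)) :
    ∃ p q : ℤ, 0 < p * a + q * b ∧ p * a + q * b < δ := by
  have hdense : Dense ((AddSubgroup.closure ({a, b} : Set ℝ) : AddSubgroup ℝ) : Set ℝ) := by
    rcases (AddSubgroup.closure ({a, b} : Set ℝ)).dense_or_cyclic with h | ⟨c, hc⟩
    · exact h
    · exfalso
      have haMem : a ∈ AddSubgroup.closure ({a, b} : Set ℝ) :=
        AddSubgroup.subset_closure (by simp)
      have hbMem : b ∈ AddSubgroup.closure ({a, b} : Set ℝ) :=
        AddSubgroup.subset_closure (by simp)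
      rw [hc, AddSubgroup.mem_closure_singleton] at haMem hbMem
      obtain ⟨m, hm⟩ := haMem
      obtain ⟨n, hn⟩ := hbMem
      have hc0 : c ≠ 0 := by
        rintro rfl; simp at hm; exact absurd hm.symm ha.ne'
      have hn0 : (n : ℝ) ≠ 0 := by
        intro h
        rw [← hn, zsmul_eq_mul, h, zero_mul] at hb
        exact lt_irrefl _ hb
      apply hirr
      refine ⟨(m : ℚ) / n, ?_⟩
      rw [← hm, ← hn]
      push_cast [zsmul_eq_mul]
      rw [mul_div_mul_right _ _ hc0]
  obtain ⟨x, hxS, hx0, hxδ⟩ :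
      ∃ x, x ∈ ((AddSubgroup.closure ({a, b} : Set ℝ) : AddSubgroup ℝ) : Set ℝ) ∧
        0 < x ∧ x < δ := by
    obtain ⟨x, hx1, hx2⟩ := hdense.exists_mem_open isOpen_Ioo (nonempty_Ioo.2 hδ)
    exact ⟨x, hx1, hx2.1, hx2.2⟩
  rw [SetLike.mem_coe, AddSubgroup.mem_closure_pair] at hxS
  obtain ⟨p, q, hpq⟩ := hxS
  refine ⟨p, q, ?_, ?_⟩ <;> simp only [zsmul_eq_mul] at hpq <;> rw [hpq] <;> assumption

/-- From a small positive element `m₀·a - k·b`, every large `t` is reachable. -/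
lemma step_lemma (a b ε : ℝ) (ha : 0 < a) (hb : 0 < b) (hε : 0 < ε)
    (h : ∃ m0 k : ℕ, 0 < m0 * a - k * b ∧ m0 * a - k * b < min ε b) :
    ∃ T : ℝ, ∀ t : ℝ, T ≤ t →
      ∃ (m n : ℕ) (s : ℝ), |s| < ε ∧ t = m * a + n * b + s := by
  obtain ⟨m0, k, hr0, hrlt⟩ := h
  set r : ℝ := m0 * a - k * b with hr
  have hrε : r < ε := lt_of_lt_of_le hrlt (min_le_left _ _)
  have hrb : r < b := lt_of_lt_of_le hrlt (min_le_right _ _)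
  set J : ℕ := ⌈b / r⌉₊ with hJ
  set K : ℕ := k * (J + 1) with hK
  refine ⟨(K + 1) * b, fun t ht => ?_⟩
  have ht0 : 0 < t := lt_of_lt_of_le (by positivity) ht
  set q : ℕ := ⌊t / b⌋₊ with hq
  have hqle : (q : ℝ) * b ≤ t := by
    rw [← le_div_iff₀ hb]; exact Nat.floor_le (by positivity)
  have hqlt : t < ((q : ℝ) + 1) * b := by
    rw [← div_lt_iff₀ hb]; exact_mod_cast Nat.lt_floor_add_one (t / b)
  have hqK : K + 1 ≤ q := by
    have : ((K : ℝ) + 1) ≤ t / b := by rw [le_div_iff₀ hb]; push_cast at ht ⊢; linarith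
    exact_mod_cast Nat.le_floor (by exact_mod_cast this)
  set u : ℝ := t - q * b with hu
  have hu0 : 0 ≤ u := by linarith
  have hub : u < b := by linarith
  set j : ℕ := ⌊u / r⌋₊ with hj
  have hjle : (j : ℝ) * r ≤ u := by
    rw [← le_div_iff₀ hr0]; exact Nat.floor_le (by positivity)
  have hjlt : u < ((j : ℝ) + 1) * r := by
    rw [← div_lt_iff₀ hr0]; exact_mod_cast Nat.lt_floor_add_one (u / r)
  have hjJ : j ≤ J := by
    have h1 : (j : ℝ) ≤ u / r := Nat.floor_le (by positivity)
    have h2 : u / r < b / r := by gcongr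
    have h3 : (j : ℝ) < (J : ℝ) := lt_of_lt_of_le (h1.trans_lt h2) (Nat.le_ceil _)
    exact_mod_cast h3.le
  have hjk : j * k ≤ q := by
    calc j * k ≤ J * k := Nat.mul_le_mul_right _ hjJ
      _ ≤ k * (J + 1) := by nlinarith [Nat.zero_le k, Nat.zero_le J]
      _ ≤ q := le_trans (Nat.le_succ K) hqK
  refine ⟨j * m0, q - j * k, u - (j : ℝ) * r, ?_, ?_⟩
  · rw [abs_of_nonneg (by linarith)]
    nlinarith
  · have hcast : ((q - j * k : ℕ) : ℝ) = (q : ℝ) - (j : ℝ) * (k : ℝ) := by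
      push_cast [Nat.cast_sub hjk]; ring
    push_cast [hcast]
    nlinarith [hr]

/-- Lemma 2 of the paper: if `a, b > 0` and `a/b` is irrational, then the set
`{ m·a + n·b + s : m, n ∈ ℕ, |s| < ε }` contains an interval `[T, ∞)`. -/
theorem semigroup_with_window_contains_ray
    (a b ε : ℝ) (ha : 0 < a) (hb : 0 < b) (hε : 0 < ε)
    (hirr : Irrational (a / b)) :
    ∃ T : ℝ, ∀ t : ℝ, T ≤ t →
      ∃ (m n : ℕ) (s : ℝ), |s| < ε ∧ t = m * a + n * b + s := by
  have hδ : (0 : ℝ) < min (min ε b) (min a b) := by positivity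
  obtain ⟨p, q, hx0, hxδ⟩ := exists_int_comb_small a b _ ha hb hδ hirr
  rcases le_or_gt q 0 with hq | hq
  · -- then p > 0 and we have `p*a - (-q)*b` small
    have hp : 0 < p := by
      by_contra hp
      push_neg at hp
      have : (p : ℝ) * a + q * b ≤ 0 := by
        have h1 : (p : ℝ) ≤ 0 := by exact_mod_cast hp
        have h2 : (q : ℝ) ≤ 0 := by exact_mod_cast hq
        nlinarith
      linarith
    apply step_lemma a b ε ha hb hε
    refine ⟨p.toNat, (-q).toNat, ?_, ?_⟩ <;>
      rw [show ((p.toNat : ℝ)) = (p : ℝ) by exact_mod_cast Int.toNat_of_nonneg hp.le,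
        show (((-q).toNat : ℝ)) = -(q : ℝ) by exact_mod_cast Int.toNat_of_nonneg (by omega)]
    · linarith
    · have := lt_of_lt_of_le hxδ (min_le_left _ _); linarith
  · -- then p < 0 : swap the roles of a and b
    have hp : p < 0 := by
      by_contra hp
      push_neg at hp
      rcases lt_or_ge 0 p with hp' | hp'
      · have h1 : (1 : ℝ) ≤ (p : ℝ) := by exact_mod_cast hp'
        have h2 : (1 : ℝ) ≤ (q : ℝ) := by exact_mod_cast hq
        have : a + b ≤ (p : ℝ) * a + q * b := by nlinarith
        have hab := lt_of_lt_of_le hxδ ((min_le_right _ _).trans (min_le_right _ _))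
        linarith
      · have hp0 : p = 0 := le_antisymm hp' hp
        subst hp0
        have h2 : (1 : ℝ) ≤ (q : ℝ) := by exact_mod_cast hq
        have hab := lt_of_lt_of_le hxδ ((min_le_right _ _).trans (min_le_right _ _))
        simp only [Int.cast_zero, zero_mul, zero_add] at hx0 hxδ hab
        nlinarith
    have hirr' : Irrational (b / a) := by
      rw [← inv_div]; exact hirr.inv
    obtain ⟨T, hT⟩ := step_lemma b a ε hb ha hε
      ⟨q.toNat, (-p).toNat, by
        constructor <;>
          rw [show ((q.toNat : ℝ)) = (q : ℝ) by exact_mod_cast Int.toNat_of_nonneg hq.le,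
            show (((-p).toNat : ℝ)) = -(p : ℝ) by exact_mod_cast Int.toNat_of_nonneg (by omega)]
        · linarith
        · have h1 := lt_of_lt_of_le hxδ ((min_le_left _ _).trans (min_le_left (α := ℝ) _ _))
          have h2 := lt_of_lt_of_le hxδ ((min_le_right _ _).trans (min_le_left (α := ℝ) _ _))
          rw [lt_min_iff]
          constructor <;> linarith⟩
    refine ⟨T, fun t ht => ?_⟩
    obtain ⟨m, n, s, hs, hts⟩ := hT t ht
    exact ⟨n, m, s, hs, by linarith [hts]⟩
end

section
/- Let φ be a flow on a topological space X, i.e., a jointly continuous map φ : ℝ × X → X with φ(0, x) = x and φ(t + s, x) = φ(t, φ(s, x)) for all t, s ∈ ℝ and x ∈ X. Let U, V ⊆ X be open sets, let y ∈ X, let t₁, t₂ > 0, ε > 0, and let a, b > 0 with a/b irrational. Assume that φ(−t₁ − m·a, y) ∈ U for every m ∈ ℕ, and that φ(t₂ + n·b + s, y) ∈ V for every n ∈ ℕ and every real s with |s| < ε. Then there exists t₀ > 0 such that for every t ≥ t₀ the set φ_t(U) ∩ V is nonempty, where φ_t(U) = { φ(t, u) : u ∈ U }. -/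
/-- Pigeonhole: some positive multiple of an irrational has fractional part near 0 or near 1. -/
lemma exists_fract_near (θ : ℝ) {δ : ℝ} (hδ : 0 < δ) :
    ∃ m : ℕ, 0 < m ∧ (Int.fract (m * θ) < δ ∨ 1 - δ < Int.fract (m * θ)) := by
  obtain ⟨N, hN⟩ := exists_nat_one_div_lt hδ
  set f : ℕ → ℕ := fun k => ⌊((N : ℝ) + 1) * Int.fract (k * θ)⌋₊ with hf
  have hmaps : ∀ k ∈ Finset.range (N + 2), f k ∈ Finset.range (N + 1) := by
    intro k _
    have h0 : (0:ℝ) ≤ ((N : ℝ) + 1) * Int.fract (k * θ) :=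
      mul_nonneg (by positivity) (Int.fract_nonneg _)
    have h1 : ((N : ℝ) + 1) * Int.fract (k * θ) < (N : ℝ) + 1 := by
      nlinarith [Int.fract_lt_one ((k : ℝ) * θ), Int.fract_nonneg ((k : ℝ) * θ)]
    simp only [Finset.mem_range, hf]
    rw [Nat.floor_lt h0]
    push_cast
    linarith
  have key : ∀ k l : ℕ, k < l → f k = f l →
      ∃ m : ℕ, 0 < m ∧ (Int.fract (m * θ) < δ ∨ 1 - δ < Int.fract (m * θ)) := by
    intro k l hkl hfkl
    have habs : |Int.fract (l * θ) - Int.fract (k * θ)| < δ := by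
      have hb : ∀ j : ℕ, (f j : ℝ) ≤ ((N : ℝ) + 1) * Int.fract (j * θ) ∧
          ((N : ℝ) + 1) * Int.fract (j * θ) < (f j : ℝ) + 1 := fun j =>
        ⟨Nat.floor_le (mul_nonneg (by positivity) (Int.fract_nonneg _)),
         Nat.lt_floor_add_one _⟩
      obtain ⟨hk1, hk2⟩ := hb k
      obtain ⟨hl1, hl2⟩ := hb l
      rw [hfkl] at hk1 hk2
      rw [abs_lt]
      have hNpos : (0:ℝ) < (N : ℝ) + 1 := by positivity
      have hN' : 1 < δ * ((N : ℝ) + 1) := by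
        rw [div_lt_iff₀ hNpos] at hN; linarith
      constructor <;> nlinarith
    refine ⟨l - k, by omega, ?_⟩
    have hcast : ((l - k : ℕ) : ℝ) * θ = (l : ℝ) * θ - (k : ℝ) * θ := by
      push_cast [Nat.cast_sub hkl.le]; ring
    set d : ℝ := Int.fract (l * θ) - Int.fract (k * θ) with hd
    have hsplit : (l:ℝ) * θ - (k:ℝ) * θ = d + ((⌊(l:ℝ)*θ⌋ - ⌊(k:ℝ)*θ⌋ : ℤ) : ℝ) := by
      simp only [hd, Int.fract]; push_cast; ring
    have hfr : Int.fract (((l - k : ℕ) : ℝ) * θ) = Int.fract d := by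
      rw [hcast, hsplit, Int.fract_add_intCast]
    rw [hfr]
    rw [abs_lt] at habs
    have hdlb : (-1 : ℝ) < d := by
      have h1 := Int.fract_nonneg ((l:ℝ) * θ)
      have h2 := Int.fract_lt_one ((k:ℝ) * θ)
      simp only [hd]; linarith
    rcases le_or_gt 0 d with hd0 | hd0
    · left
      rw [Int.fract_eq_self.2 ⟨hd0, by
          have h1 := Int.fract_lt_one ((l:ℝ) * θ)
          have h2 := Int.fract_nonneg ((k:ℝ) * θ)
          simp only [hd]; linarith⟩]
      exact habs.2
    · right
      have hfd : Int.fract d = d + 1 := by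
        rw [← Int.fract_add_one d, Int.fract_eq_self.2 ⟨by linarith, by linarith⟩]
      rw [hfd]; linarith
  obtain ⟨k, hk, l, hl, hkl, hfkl⟩ :=
    Finset.exists_ne_map_eq_of_card_lt_of_maps_to (by simp) hmaps
  rcases lt_or_gt_of_ne hkl with h | h
  · exact key k l h hfkl
  · exact key l k h hfkl.symm

/-- For irrational `θ` and `δ > 0`, there is a uniform bound `C` such that every real `x`
can be shifted by `m * θ`, `m ∈ ℕ`, `m ≤ C`, so that the fractional part drops below `δ`. -/
lemma exists_bounded_shift (θ : ℝ) (hθ : Irrational θ) {δ : ℝ} (hδ : 0 < δ) :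
    ∃ C : ℝ, 0 ≤ C ∧ ∀ x : ℝ, ∃ m : ℕ, (m : ℝ) ≤ C ∧ Int.fract (x - m * θ) < δ := by
  obtain ⟨p, hp, hcase⟩ := exists_fract_near θ hδ
  set β : ℝ := Int.fract (p * θ) with hβ
  have hβ1 : β < 1 := Int.fract_lt_one _
  have hβ0 : 0 < β := by
    rcases (Int.fract_nonneg ((p:ℝ) * θ)).lt_or_eq with h | h
    · exact h
    · exfalso
      have hirr : Irrational ((p : ℝ) * θ) := hθ.natCast_mul hp.ne'
      refine hirr.ne_int ⌊(p:ℝ) * θ⌋ ?_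
      have h' : Int.fract ((p:ℝ) * θ) = 0 := h.symm
      rw [Int.fract] at h'
      linarith
  have h1β : (0:ℝ) < 1 - β := by linarith
  have hsum : (0:ℝ) < 1/β + 1/(1-β) + 1 := by
    have := one_div_pos.2 hβ0
    have := one_div_pos.2 h1β
    linarith
  refine ⟨(p : ℝ) * (1/β + 1/(1-β) + 1), mul_nonneg (Nat.cast_nonneg p) hsum.le,
    fun x => ?_⟩
  set u : ℝ := Int.fract x with hu
  have hu0 : 0 ≤ u := Int.fract_nonneg x
  have hu1 : u < 1 := Int.fract_lt_one x
  have hred : ∀ j : ℕ, Int.fract (x - ((j * p : ℕ) : ℝ) * θ) = Int.fract (u - j * β) := by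
    intro j
    have hkey : x - ((j * p : ℕ) : ℝ) * θ
        = (u - j * β) + ((⌊x⌋ - j * ⌊(p:ℝ) * θ⌋ : ℤ) : ℝ) := by
      simp only [hu, hβ, Int.fract]
      push_cast
      ring
    rw [hkey, Int.fract_add_intCast]
  have hp0 : (0:ℝ) ≤ (p : ℝ) := Nat.cast_nonneg p
  rcases hcase with hsmall | hbig
  · -- β < δ : step down
    set j : ℕ := ⌊u / β⌋₊ with hj
    have hj1 : (j : ℝ) ≤ u / β := Nat.floor_le (by positivity)
    have hj2 : u / β < (j : ℝ) + 1 := Nat.lt_floor_add_one _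
    have hjβ : (j : ℝ) * β ≤ u := by
      calc (j : ℝ) * β ≤ (u / β) * β := by nlinarith
      _ = u := by field_simp
    have hjβ' : u < ((j : ℝ) + 1) * β := by
      calc u = (u / β) * β := by field_simp
      _ < ((j : ℝ) + 1) * β := by nlinarith
    refine ⟨j * p, ?_, ?_⟩
    · push_cast
      have hjb : (j : ℝ) ≤ 1 / β := hj1.trans ((div_le_div_iff_of_pos_right hβ0).2 hu1.le)
      have := one_div_pos.2 h1β
      nlinarith
    · rw [hred j, Int.fract_eq_self.2 ⟨by linarith, by nlinarith⟩]
      nlinarith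
  · -- β > 1 - δ : step up past an integer
    set γ : ℝ := 1 - β with hγ
    have hγ0 : 0 < γ := h1β
    have hγδ : γ < δ := by simp only [hγ]; linarith
    have hγ1 : γ < 1 := by simp only [hγ]; linarith
    set j : ℕ := ⌈(1 - u) / γ⌉₊ with hj
    have hj1 : (1 - u) / γ ≤ (j : ℝ) := Nat.le_ceil _
    have hj2 : (j : ℝ) < (1 - u) / γ + 1 :=
      Nat.ceil_lt_add_one (div_nonneg (by linarith) hγ0.le)
    have hjγ : 1 - u ≤ (j : ℝ) * γ := by
      calc 1 - u = ((1 - u) / γ) * γ := by field_simp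
      _ ≤ (j : ℝ) * γ := by nlinarith
    have hjγ' : (j : ℝ) * γ < 1 - u + γ := by
      calc (j : ℝ) * γ < ((1 - u) / γ + 1) * γ := by nlinarith
      _ = 1 - u + γ := by field_simp
    refine ⟨j * p, ?_, ?_⟩
    · push_cast
      have hjb : (j : ℝ) ≤ 1 / γ + 1 := by
        have h1u : (1 - u) / γ ≤ 1 / γ := (div_le_div_iff_of_pos_right hγ0).2 (by linarith)
        linarith
      have := one_div_pos.2 hβ0
      nlinarith
    · rw [hred j]
      have harg : Int.fract (u - (j : ℝ) * β) = Int.fract (u + (j : ℝ) * γ - 1) := by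
        rw [← Int.fract_add_intCast (u + (j : ℝ) * γ - 1) (1 - (j : ℤ))]
        congr 1
        push_cast
        simp only [hγ]
        ring
      rw [harg, Int.fract_eq_self.2 ⟨by linarith, by linarith⟩]
      linarith

/-- The core mixing mechanism of Theorem B: if the backward orbit of `y` hits `U` at
times `−t₁ − m·a` and the forward orbit hits `V` at times `t₂ + n·b + s`, `|s| < ε`,
with `a/b` irrational, then `φ_t(U) ∩ V ≠ ∅` for all sufficiently large `t`. -/
theorem eventual_intersection_of_flow_images
    {X : Type*} [TopologicalSpace X]
    (φ : ℝ × X → X) (hφ_cont : Continuous φ)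
    (hφ0 : ∀ x, φ (0, x) = x)
    (hφadd : ∀ t s x, φ (t + s, x) = φ (t, φ (s, x)))
    (U V : Set X) (hU : IsOpen U) (hV : IsOpen V)
    (y : X) (t₁ t₂ ε a b : ℝ)
    (ht₁ : 0 < t₁) (ht₂ : 0 < t₂) (hε : 0 < ε)
    (ha : 0 < a) (hb : 0 < b) (hirr : Irrational (a / b))
    (hyU : ∀ m : ℕ, φ (-t₁ - m * a, y) ∈ U)
    (hyV : ∀ n : ℕ, ∀ s : ℝ, |s| < ε → φ (t₂ + n * b + s, y) ∈ V) :
    ∃ t₀ : ℝ, 0 < t₀ ∧ ∀ t : ℝ, t₀ ≤ t →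
      ((fun u => φ (t, u)) '' U ∩ V).Nonempty := by
  have hmin : 0 < min ε b := lt_min hε hb
  set δ : ℝ := min ε b / (2 * b) with hδdef
  have hδ : 0 < δ := div_pos hmin (by positivity)
  obtain ⟨C, hC0, hC⟩ := exists_bounded_shift (a / b) hirr hδ
  have hCa : 0 ≤ C * a := mul_nonneg hC0 ha.le
  refine ⟨t₁ + t₂ + C * a + 1, by linarith, fun t ht => ?_⟩
  set x : ℝ := t - t₁ - t₂ with hx
  have hxCa : C * a + 1 ≤ x := by simp only [hx]; linarith
  obtain ⟨m, hmC, hfr⟩ := hC (x / b)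
  have hma : (m : ℝ) * a ≤ x := by
    nlinarith [mul_le_mul_of_nonneg_right hmC ha.le]
  set r : ℝ := (x - m * a) / b with hr
  have hr0 : 0 ≤ r := div_nonneg (by linarith) hb.le
  set n : ℕ := ⌊r⌋₊ with hn
  have hn1 : (n : ℝ) ≤ r := Nat.floor_le hr0
  have hn2 : r < (n : ℝ) + 1 := Nat.lt_floor_add_one r
  set s : ℝ := x - m * a - n * b with hs
  have hsr : s = (r - n) * b := by
    simp only [hs, hr]; field_simp
  have hfr' : Int.fract r < δ := by
    have hreq : r = x / b - m * (a / b) := by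
      simp only [hr]; field_simp
    rw [hreq]; exact hfr
  have hfreq : Int.fract r = r - n := by
    have h1 : Int.fract (r - (n : ℝ)) = Int.fract r := by
      rw [show (n : ℝ) = ((n : ℤ) : ℝ) by push_cast; rfl, Int.fract_sub_intCast]
    rw [← h1, Int.fract_eq_self.2 ⟨by linarith, by linarith⟩]
  have hs0 : 0 ≤ s := by rw [hsr]; nlinarith
  have hsε : |s| < ε := by
    rw [abs_of_nonneg hs0, hsr]
    have : (r - n) * b < δ * b := by
      have := hfreq ▸ hfr'
      nlinarith
    have hδb : δ * b = min ε b / 2 := by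
      rw [hδdef]; field_simp
    have := min_le_left ε b
    linarith
  refine ⟨φ (t, φ (-t₁ - m * a, y)), ⟨_, hyU m, rfl⟩, ?_⟩
  rw [← hφadd]
  have harg : t + (-t₁ - m * a) = t₂ + n * b + s := by
    simp only [hs, hx]; ring
  rw [harg]
  exact hyV n s hsε
end

section
/- Let φ be a flow on a metric space X, i.e., a jointly continuous map φ : ℝ × X → X with φ(0, x) = x and φ(t + s, x) = φ(t, φ(s, x)). Let q ∈ X and b > 0 satisfy φ(b, q) = q, and let z ∈ X satisfy d(φ(t, z), φ(t, q)) → 0 as t → +∞. Then for every open neighborhood V of q there exist t₂ > 0 and ε > 0 such that φ(t₂ + n·b + s, z) ∈ V for every n ∈ ℕ and every real s with |s| < ε. -/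
/-- If `q` is periodic of period `b` for the flow `φ` and `z` lies in the strong
stable set of `q`, then every open neighborhood `V` of `q` is hit at all times
`t₂ + n·b + s`, `|s| < ε`, for some `t₂ > 0` and `ε > 0`. -/
theorem strong_stable_forward_hitting_times
    {X : Type*} [MetricSpace X]
    (φ : ℝ × X → X) (hφ_cont : Continuous φ)
    (hφ0 : ∀ x, φ (0, x) = x)
    (hφadd : ∀ t s x, φ (t + s, x) = φ (t, φ (s, x)))
    (q : X) (b : ℝ) (hb : 0 < b) (hq : φ (b, q) = q)
    (z : X)
    (hz : Filter.Tendsto (fun t : ℝ => dist (φ (t, z)) (φ (t, q)))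
      Filter.atTop (nhds 0)) :
    ∀ V : Set X, IsOpen V → q ∈ V →
      ∃ t₂ : ℝ, 0 < t₂ ∧ ∃ ε : ℝ, 0 < ε ∧
        ∀ n : ℕ, ∀ s : ℝ, |s| < ε → φ (t₂ + n * b + s, z) ∈ V := by
  intro V hV hqV
  -- periodicity at natural multiples
  have hper : ∀ k : ℕ, φ ((k : ℝ) * b, q) = q := by
    intro k
    induction k with
    | zero => simpa using hφ0 q
    | succ k ih =>
      have : ((k + 1 : ℕ) : ℝ) * b = b + (k : ℝ) * b := by push_cast; ring
      rw [this, hφadd, ih, hq]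
  obtain ⟨r, hr, hball⟩ := Metric.isOpen_iff.mp hV q hqV
  -- continuity of s ↦ φ (s, q) at 0
  have hf : Continuous fun s : ℝ => φ (s, q) :=
    hφ_cont.comp (continuous_id.prodMk continuous_const)
  have hfa : ContinuousAt (fun s : ℝ => φ (s, q)) 0 := hf.continuousAt
  rw [Metric.continuousAt_iff] at hfa
  obtain ⟨ε, hε, hεball⟩ := hfa (r / 2) (by linarith)
  -- eventual closeness of orbits
  have hev : ∀ᶠ t in Filter.atTop, dist (φ (t, z)) (φ (t, q)) < r / 2 :=
    hz.eventually (gt_mem_nhds (by linarith))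
  obtain ⟨T, hT⟩ := Filter.eventually_atTop.mp hev
  obtain ⟨m, hm⟩ := exists_nat_ge ((T + ε) / b)
  refine ⟨((m + 1 : ℕ) : ℝ) * b, by positivity, ε, hε, ?_⟩
  intro n s hs
  have hmb : T + ε ≤ ((m : ℝ)) * b := by
    rw [div_le_iff₀ hb] at hm
    exact hm
  have ht₂ : T + ε ≤ ((m + 1 : ℕ) : ℝ) * b := by
    push_cast; nlinarith
  have habs := abs_lt.mp hs
  set u : ℝ := ((m + 1 : ℕ) : ℝ) * b + (n : ℝ) * b + s with hu
  have hnb : 0 ≤ (n : ℝ) * b := by positivity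
  have hTu : T ≤ u := by simp only [hu]; linarith [habs.1]
  have h1 : dist (φ (u, z)) (φ (u, q)) < r / 2 := hT u hTu
  have huq : φ (u, q) = φ (s, q) := by
    have : u = s + ((m + 1 + n : ℕ) : ℝ) * b := by simp only [hu]; push_cast; ring
    rw [this, hφadd, hper]
  have h2 : dist (φ (s, q)) q < r / 2 := by
    have := hεball (x := s) (by simpa [Real.dist_eq] using hs)
    simpa [hφ0, Real.dist_eq] using this
  apply hball
  have : dist (φ (u, z)) q < r := by
    rw [huq] at h1
    have htri := dist_triangle (φ (u, z)) (φ (s, q)) q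
    linarith
  exact Metric.mem_ball.mpr this
end

section
/- Let φ be a flow on a metric space X, i.e., a jointly continuous map φ : ℝ × X → X with φ(0, x) = x and φ(t + s, x) = φ(t, φ(s, x)). Let p, q ∈ X and a, b > 0 satisfy φ(a, p) = p and φ(b, q) = q, and assume a/b is irrational. Suppose there exists y ∈ X with d(φ(−t, y), φ(−t, p)) → 0 and d(φ(t, y), φ(t, q)) → 0 as t → +∞. Then for every open set U containing p and every open set V containing q there exists t₀ > 0 such that φ_t(U) ∩ V ≠ ∅ for all t ≥ t₀, where φ_t(U) = { φ(t, u) : u ∈ U }. -/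
/-- Small positive combinations of `a,b` with irrational ratio. -/
lemma exists_small_comb (a b ε : ℝ) (ha : 0 < a) (hb : 0 < b)
    (hirr : Irrational (a / b)) (hε : 0 < ε) (hεa : ε < a) (hεb : ε < b) :
    (∃ n m : ℕ, 1 ≤ n ∧ 1 ≤ m ∧ 0 < (n : ℝ) * a - m * b ∧ (n : ℝ) * a - m * b < ε) ∨
    (∃ n m : ℕ, 1 ≤ n ∧ 1 ≤ m ∧ 0 < (m : ℝ) * b - n * a ∧ (m : ℝ) * b - n * a < ε) := by
  have hdense : Dense ((AddSubgroup.closure {a, b} : AddSubgroup ℝ) : Set ℝ) := by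
    rcases AddSubgroup.dense_or_cyclic (AddSubgroup.closure {a, b}) with h | ⟨g, hg⟩
    · exact h
    · exfalso
      have hA : a ∈ AddSubgroup.closure ({a, b} : Set ℝ) :=
        AddSubgroup.subset_closure (by simp)
      have hB : b ∈ AddSubgroup.closure ({a, b} : Set ℝ) :=
        AddSubgroup.subset_closure (by simp)
      rw [hg, AddSubgroup.mem_closure_singleton] at hA hB
      obtain ⟨k, hk⟩ := hA
      obtain ⟨l, hl⟩ := hB
      have hg0 : g ≠ 0 := by
        rintro rfl; simp at hk; exact ha.ne' hk.symm
      have hl0 : (l : ℝ) ≠ 0 := by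
        rintro h; rw [zsmul_eq_mul, h, zero_mul] at hl; exact hb.ne' hl.symm
      apply hirr
      refine ⟨(k : ℚ) / l, ?_⟩
      rw [zsmul_eq_mul] at hk hl
      push_cast
      rw [div_eq_div_iff hl0 hb.ne', ← hk, ← hl]
      ring
  obtain ⟨g, hgS, hg⟩ := hdense.exists_mem_open isOpen_Ioo (Set.nonempty_Ioo.mpr hε)
  obtain ⟨hg0, hgε⟩ := hg
  rw [SetLike.mem_coe, AddSubgroup.mem_closure_pair] at hgS
  obtain ⟨k, l, hkl⟩ := hgS
  rw [zsmul_eq_mul, zsmul_eq_mul] at hkl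
  rcases le_or_gt k 0 with hk | hk <;> rcases le_or_gt l 0 with hl | hl
  · -- both ≤ 0 : g ≤ 0, contradiction
    exfalso
    have h1 : (k : ℝ) * a ≤ 0 := mul_nonpos_of_nonpos_of_nonneg (by exact_mod_cast hk) ha.le
    have h2 : (l : ℝ) * b ≤ 0 := mul_nonpos_of_nonpos_of_nonneg (by exact_mod_cast hl) hb.le
    linarith
  · -- k ≤ 0 < l : right case
    have hk1 : k ≤ -1 := by
      rcases lt_or_eq_of_le hk with h | rfl
      · omega
      · exfalso
        have : (1 : ℝ) ≤ (l : ℝ) := by exact_mod_cast hl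
        push_cast at hkl
        nlinarith
    refine Or.inr ⟨(-k).toNat, l.toNat, by omega, by omega, ?_, ?_⟩ <;>
      · have e1 : ((-k).toNat : ℤ) = -k := Int.toNat_of_nonneg (by omega)
        have e2 : (l.toNat : ℤ) = l := Int.toNat_of_nonneg (by omega)
        have h1 : (((-k).toNat : ℕ) : ℝ) = -(k : ℝ) := by exact_mod_cast e1
        have h2 : ((l.toNat : ℕ) : ℝ) = (l : ℝ) := by exact_mod_cast e2
        rw [h1, h2]
        nlinarith
  · -- l ≤ 0 < k : left case
    have hl1 : l ≤ -1 := by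
      rcases lt_or_eq_of_le hl with h | rfl
      · omega
      · exfalso
        have : (1 : ℝ) ≤ (k : ℝ) := by exact_mod_cast hk
        push_cast at hkl
        nlinarith
    refine Or.inl ⟨k.toNat, (-l).toNat, by omega, by omega, ?_, ?_⟩ <;>
      · have e1 : (k.toNat : ℤ) = k := Int.toNat_of_nonneg (by omega)
        have e2 : ((-l).toNat : ℤ) = -l := Int.toNat_of_nonneg (by omega)
        have h1 : ((k.toNat : ℕ) : ℝ) = (k : ℝ) := by exact_mod_cast e1
        have h2 : (((-l).toNat : ℕ) : ℝ) = -(l : ℝ) := by exact_mod_cast e2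
        rw [h1, h2]
        nlinarith
  · -- both > 0 : g ≥ a, contradiction
    exfalso
    have h1 : (1 : ℝ) ≤ (k : ℝ) := by exact_mod_cast hk
    have h2 : (0 : ℝ) ≤ (l : ℝ) := by exact_mod_cast hl.le
    nlinarith

/-- Approximation lemma: if `g = n₀ a - m₀ b > 0`, every large `t` is within `g`
above some `n a + m b` with `n, m ≥ N`. -/
lemma approx_lemma (a b g : ℝ) (ha : 0 < a) (hb : 0 < b) (n₀ m₀ : ℕ)
    (hg0 : 0 < g) (hgeq : g = (n₀ : ℝ) * a - m₀ * b) (N : ℕ) :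
    ∃ T : ℝ, ∀ t : ℝ, T ≤ t → ∃ n m : ℕ, N ≤ n ∧ N ≤ m ∧
      0 ≤ t - n * a - m * b ∧ t - n * a - m * b < g := by
  set K := ⌈b / g⌉₊ with hK
  refine ⟨N * a + (N + K * m₀ + 1) * b, fun t ht => ?_⟩
  have hx0 : (0:ℝ) ≤ (t - N * a) / b := by
    have : (0:ℝ) ≤ ((N:ℝ) + K * m₀ + 1) * b := by positivity
    have := div_nonneg (by linarith : (0:ℝ) ≤ t - N * a) hb.le
    linarith [this]
  set m₁ := ⌊(t - N * a) / b⌋₊ with hm₁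
  have hm₁le : (m₁ : ℝ) ≤ (t - N * a) / b := Nat.floor_le hx0
  have hm₁lt : (t - N * a) / b < m₁ + 1 := Nat.lt_floor_add_one _
  have hm₁big : N + K * m₀ ≤ m₁ := by
    apply Nat.le_floor
    rw [le_div_iff₀ hb]
    push_cast
    nlinarith [ht]
  set r₁ := t - N * a - m₁ * b with hr₁
  have hr₁0 : 0 ≤ r₁ := by
    have := (mul_le_mul_iff_of_pos_right hb).mpr hm₁le
    rw [div_mul_cancel₀ _ hb.ne'] at this
    linarith
  have hr₁b : r₁ < b := by
    have := (mul_lt_mul_iff_of_pos_right hb).mpr hm₁lt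
    rw [div_mul_cancel₀ _ hb.ne'] at this
    nlinarith
  set j := ⌊r₁ / g⌋₊ with hj
  have hjle : (j : ℝ) ≤ r₁ / g := Nat.floor_le (div_nonneg hr₁0 hg0.le)
  have hjlt : r₁ / g < j + 1 := Nat.lt_floor_add_one _
  have hjK : j ≤ K := by
    have h1 : r₁ / g < b / g := (div_lt_div_iff_of_pos_right hg0).mpr hr₁b
    have h2 : b / g ≤ (K : ℝ) := Nat.le_ceil _
    have : (j : ℝ) < (K : ℝ) := lt_of_le_of_lt hjle (lt_of_lt_of_le h1 h2)
    exact_mod_cast this.le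
  have hjm : j * m₀ + N ≤ m₁ := by
    have : j * m₀ ≤ K * m₀ := Nat.mul_le_mul_right _ hjK
    omega
  refine ⟨N + j * n₀, m₁ - j * m₀, Nat.le_add_right _ _, by omega, ?_, ?_⟩ <;>
  · have hcast : ((m₁ - j * m₀ : ℕ) : ℝ) = (m₁ : ℝ) - (j : ℝ) * m₀ := by
      push_cast [Nat.cast_sub (by omega : j * m₀ ≤ m₁)]; ring
    rw [hcast]
    push_cast
    have h1 : (j : ℝ) * g ≤ r₁ := by
      rw [← le_div_iff₀ hg0] at *; linarith [hjle]
    have h2 : r₁ < ((j : ℝ) + 1) * g := by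
      rw [← div_lt_iff₀ hg0] at *; linarith [hjlt]
    nlinarith [hgeq]

/-- Every sufficiently large real is within `ε` above some `n a + m b`, `n, m ≥ N`. -/
lemma key_lemma (a b : ℝ) (ha : 0 < a) (hb : 0 < b) (hirr : Irrational (a / b))
    (ε : ℝ) (hε : 0 < ε) (N : ℕ) :
    ∃ T : ℝ, ∀ t : ℝ, T ≤ t → ∃ n m : ℕ, N ≤ n ∧ N ≤ m ∧
      0 ≤ t - n * a - m * b ∧ t - n * a - m * b ≤ ε := by
  set ε' := min ε (min a b) / 2 with hε'
  have hmin : 0 < min ε (min a b) := lt_min hε (lt_min ha hb)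
  have hε'0 : 0 < ε' := by positivity
  have h1 := min_le_left ε (min a b)
  have h2 := min_le_right ε (min a b)
  have h3 := min_le_left a b
  have h4 := min_le_right a b
  have hε'ε : ε' ≤ ε := by rw [hε']; linarith
  have hε'a : ε' < a := by rw [hε']; linarith
  have hε'b : ε' < b := by rw [hε']; linarith
  rcases exists_small_comb a b ε' ha hb hirr hε'0 hε'a hε'b with
    ⟨n₀, m₀, _, _, hgpos, hgε⟩ | ⟨n₀, m₀, _, _, hgpos, hgε⟩
  · obtain ⟨T, hT⟩ := approx_lemma a b _ ha hb n₀ m₀ hgpos rfl N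
    refine ⟨T, fun t ht => ?_⟩
    obtain ⟨n, m, h1, h2, h3, h4⟩ := hT t ht
    exact ⟨n, m, h1, h2, h3, by linarith⟩
  · obtain ⟨T, hT⟩ := approx_lemma b a _ hb ha m₀ n₀ hgpos rfl N
    refine ⟨T, fun t ht => ?_⟩
    obtain ⟨n, m, h1, h2, h3, h4⟩ := hT t ht
    exact ⟨m, n, h2, h1, by linarith, by linarith⟩

/-- Iterating a periodic point of a flow. -/
lemma flow_iterate {X : Type*} (φ : ℝ × X → X)
    (hφ0 : ∀ x, φ (0, x) = x)
    (hφadd : ∀ t s x, φ (t + s, x) = φ (t, φ (s, x)))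
    (c : ℝ) (x : X) (h : φ (c, x) = x) (k : ℕ) : φ ((k : ℝ) * c, x) = x := by
  induction k with
  | zero => simpa using hφ0 x
  | succ k ih =>
    have e : ((k + 1 : ℕ) : ℝ) * c = c + (k : ℝ) * c := by push_cast; ring
    rw [e, hφadd, ih, h]

/-- The heteroclinic mixing criterion of Theorem B: if `p`, `q` are periodic points
of periods `a`, `b` with `a/b` irrational, joined by a strong heteroclinic connection
`y ∈ W^{uu}(p) ∩ W^{ss}(q)`, then for all open `U ∋ p` and `V ∋ q`, `φ_t(U) ∩ V ≠ ∅`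
for all sufficiently large `t`. -/
theorem heteroclinic_mixing_criterion
    {X : Type*} [MetricSpace X]
    (φ : ℝ × X → X) (hφ_cont : Continuous φ)
    (hφ0 : ∀ x, φ (0, x) = x)
    (hφadd : ∀ t s x, φ (t + s, x) = φ (t, φ (s, x)))
    (p q : X) (a b : ℝ) (ha : 0 < a) (hb : 0 < b)
    (hp : φ (a, p) = p) (hq : φ (b, q) = q)
    (hirr : Irrational (a / b))
    (y : X)
    (hyu : Filter.Tendsto (fun t : ℝ => dist (φ (-t, y)) (φ (-t, p)))
      Filter.atTop (nhds 0))
    (hys : Filter.Tendsto (fun t : ℝ => dist (φ (t, y)) (φ (t, q)))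
      Filter.atTop (nhds 0)) :
    ∀ U : Set X, IsOpen U → p ∈ U →
    ∀ V : Set X, IsOpen V → q ∈ V →
      ∃ t₀ : ℝ, 0 < t₀ ∧ ∀ t : ℝ, t₀ ≤ t →
        ((fun u => φ (t, u)) '' U ∩ V).Nonempty := by
  intro U hU hpU V hV hqV
  -- a ball around p inside U
  obtain ⟨δ, hδ0, hδU⟩ := Metric.isOpen_iff.mp hU p hpU
  -- a product ball around (0, q) mapped into V by φ
  have hWopen : IsOpen (φ ⁻¹' V) := hV.preimage hφ_cont
  have hWmem : ((0 : ℝ), q) ∈ φ ⁻¹' V := by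
    simp only [Set.mem_preimage, hφ0]; exact hqV
  obtain ⟨ρ, hρ0, hρ⟩ := Metric.isOpen_iff.mp hWopen _ hWmem
  -- eventual closeness
  obtain ⟨S₁, hS₁⟩ := Filter.eventually_atTop.mp (hyu.eventually_lt_const hδ0)
  obtain ⟨S₂, hS₂⟩ := Filter.eventually_atTop.mp (hys.eventually_lt_const hρ0)
  set N : ℕ := max ⌈S₁ / a⌉₊ ⌈S₂ / b⌉₊ with hN
  have hNa : ∀ n : ℕ, N ≤ n → S₁ ≤ (n : ℝ) * a := by
    intro n hn
    have h1 : S₁ / a ≤ (n : ℝ) :=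
      le_trans (Nat.le_ceil _) (by exact_mod_cast le_trans (le_max_left _ _) hn)
    exact (div_le_iff₀ ha).mp h1
  have hNb : ∀ m : ℕ, N ≤ m → S₂ ≤ (m : ℝ) * b := by
    intro m hm
    have h1 : S₂ / b ≤ (m : ℝ) :=
      le_trans (Nat.le_ceil _) (by exact_mod_cast le_trans (le_max_right _ _) hm)
    exact (div_le_iff₀ hb).mp h1
  obtain ⟨T, hT⟩ := key_lemma a b ha hb hirr (ρ / 2) (by linarith) N
  refine ⟨max T 1, lt_of_lt_of_le one_pos (le_max_right _ _), fun t ht => ?_⟩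
  obtain ⟨n, m, hn, hm, hr0, hrε⟩ := hT t (le_trans (le_max_left _ _) ht)
  set r := t - n * a - m * b with hr
  -- the point u ∈ U
  set u := φ (-((n : ℝ) * a), y) with hu
  have hpn : φ ((n : ℝ) * a, p) = p := flow_iterate φ hφ0 hφadd a p hp n
  have hpfix : φ (-((n : ℝ) * a), p) = p := by
    conv_lhs => rw [← hpn, ← hφadd]
    rw [neg_add_cancel, hφ0]
  have hdistu : dist u p < δ := by
    have := hS₁ ((n : ℝ) * a) (hNa n hn)
    rwa [hpfix] at this
  have huU : u ∈ U := hδU (Metric.mem_ball.mpr hdistu)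
  -- the landing point
  set z := φ ((m : ℝ) * b, y) with hz
  have hqm : φ ((m : ℝ) * b, q) = q := flow_iterate φ hφ0 hφadd b q hq m
  have hdistz : dist z q < ρ := by
    have := hS₂ ((m : ℝ) * b) (hNb m hm)
    rwa [hqm] at this
  have hrρ : |r| < ρ := by
    rw [abs_of_nonneg hr0]; linarith
  have hrzV : φ (r, z) ∈ V := by
    apply hρ
    rw [Metric.mem_ball, Prod.dist_eq]
    refine max_lt ?_ hdistz
    rwa [Real.dist_eq, sub_zero]
  have hkey : φ (t, u) = φ (r, z) := by
    rw [hu, ← hφadd, hz, ← hφadd]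
    congr 1
    rw [hr]; ring_nf
  refine ⟨φ (t, u), ⟨u, huU, rfl⟩, ?_⟩
  rw [hkey]; exact hrzV
end
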